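/- Exact Laplacian mass of L_q: Let f(x) = exp(−2|x|) be the Laplacian, extended multiplicatively to ℝ². For any s > 0 and any positive integer q, it holds that f_s(L_q) = coth(2/s)·coth(q/s) + 2q·e^{2q/s}/(e^{2q/s} − 1)², where L_q := ∪_{z∈ℤ}((z,z) + qℤ²). -/

import Mathlib

/-!
Parametrize `L_q` by `(m, a) ↦ (a, a + q m)`, a bijection `ℤ² ≃ L_q` when `q ≠ 0`. At integers
`f_s(n) = t ^ |n|` with `t = e^{-2/s}`, so the mass is `∑_m ∑_a t^|a| t^|a + q m|`. For fixed
`m`, with `N = q |m|`, the summand in `a` equals `t^N` at the `N + 1` points `-N ≤ a ≤ 0` and is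
geometric of ratio `t²` beyond them, so the sum over `a` is `t^N (coth(2/s) + N)`. Summing
`u^|m| (coth(2/s) + q |m|)` over `m`, with `u = t^q = e^{-2q/s}`, gives
`coth(2/s) coth(q/s) + 2 q u / (1 - u)^2`.
-/

noncomputable section

/-- The Laplacian function `f(x) = exp(-2|x|)`. -/
def lap (x : ℝ) : ℝ := Real.exp (-2 * |x|)

/-- The lattice `L_q = ∪_{z∈ℤ} ((z,z) + qℤ²) ⊂ ℝ²`. -/
def LqSet (q : ℕ) : Set (ℝ × ℝ) :=
  {v | ∃ z w₁ w₂ : ℤ, v.1 = z + q * w₁ ∧ v.2 = z + q * w₂}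

/-- `f_s(L_q)`: the sum over `L_q` of the multiplicative extension of `f` to `ℝ²`,
scaled by `s` (i.e. `f_s(x) = f(x/s)`). -/
def fsLq (f : ℝ → ℝ) (s : ℝ) (q : ℕ) : ℝ :=
  ∑' v : LqSet q, f ((v : ℝ × ℝ).1 / s) * f ((v : ℝ × ℝ).2 / s)

/-- `coth x = (e^x + e^{-x})/(e^x - e^{-x})`. -/
def coth' (x : ℝ) : ℝ := (Real.exp x + Real.exp (-x)) / (Real.exp x - Real.exp (-x))

open Real

lemma lap_intCast_mul (n : ℤ) (x : ℝ) : lap (n * x) = lap x ^ n.natAbs := by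
  rw [lap, lap, ← exp_nat_mul, abs_mul, Nat.cast_natAbs, Int.cast_abs]
  ring_nf

lemma coth'_eq_div (x : ℝ) : coth' x = (1 + exp (-2 * x)) / (1 - exp (-2 * x)) := by
  have hsq : exp (-2 * x) = exp (-x) * exp (-x) := by rw [← exp_add]; ring_nf
  rw [coth', ← mul_div_mul_right _ _ (exp_pos (-x)).ne', hsq, add_mul, sub_mul, ← exp_add,
    add_neg_cancel, exp_zero]

lemma exp_div_exp_sub_one_sq (y : ℝ) :
    exp y / (exp y - 1) ^ 2 = exp (-y) / (1 - exp (-y)) ^ 2 := by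
  have h : exp y * exp (-y) = 1 := by rw [← exp_add, add_neg_cancel, exp_zero]
  rw [← mul_div_mul_right _ _ (pow_ne_zero 2 (exp_pos (-y)).ne'), ← mul_pow, sub_mul, h, one_mul]
  congr 1
  rw [sq, ← mul_assoc, h, one_mul]

lemma HasSum.int_natAbs {G : Type*} [AddCommGroup G] [TopologicalSpace G]
    [IsTopologicalAddGroup G] {g : ℕ → G} {a : G} (hg : HasSum g a) :
    HasSum (fun m : ℤ => g m.natAbs) (a + (a - g 0)) := by
  refine HasSum.of_nat_of_neg_add_one (by simpa using hg) ?_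
  have h := (hasSum_nat_add_iff' 1).mpr hg
  simp only [Finset.range_one, Finset.sum_singleton] at h
  exact h.congr_fun fun n => congrArg g (by omega)

lemma hasSum_pow_natAbs {u : ℝ} (hu : |u| < 1) :
    HasSum (fun m : ℤ => u ^ m.natAbs) ((1 + u) / (1 - u)) := by
  have hu1 : 1 - u ≠ 0 := by linarith [le_abs_self u]
  rw [show (1 + u) / (1 - u) = (1 - u)⁻¹ + ((1 - u)⁻¹ - u ^ 0) by field_simp; ring]
  exact (hasSum_geometric_of_abs_lt_one hu).int_natAbs

lemma hasSum_natAbs_mul_pow_natAbs {u : ℝ} (hu : |u| < 1) :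
    HasSum (fun m : ℤ => (m.natAbs : ℝ) * u ^ m.natAbs) (2 * u / (1 - u) ^ 2) := by
  have h := (hasSum_coe_mul_geometric_of_norm_lt_one (r := u) hu).int_natAbs
  rw [Nat.cast_zero, zero_mul, sub_zero, ← two_mul, ← mul_div_assoc] at h
  exact h

lemma hasSum_pow_natAbs_mul_pow_natAbs_add_natCast {t : ℝ} (ht : |t| < 1) (N : ℕ) :
    HasSum (fun a : ℤ => t ^ a.natAbs * t ^ (a + N).natAbs)
      (t ^ N * ((1 + t ^ 2) / (1 - t ^ 2) + N)) := by
  have hsq : |t ^ 2| < 1 := by rw [abs_pow]; exact pow_lt_one₀ (abs_nonneg t) ht two_ne_zero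
  have hgeom := hasSum_geometric_of_abs_lt_one hsq
  have ht2 : 1 - t ^ 2 ≠ 0 := by linarith [le_abs_self (t ^ 2)]
  have hnonneg : HasSum (fun n : ℕ => t ^ (n : ℤ).natAbs * t ^ ((n : ℤ) + N).natAbs)
      (t ^ N * (1 - t ^ 2)⁻¹) := by
    refine (hgeom.mul_left (t ^ N)).congr_fun fun n => ?_
    rw [← pow_mul, ← pow_add, ← pow_add]
    congr 1
    omega
  -- for `-N ≤ a < 0` the summand is constantly `t ^ N`; below `-N` it is geometric again
  have hneg : HasSum (fun n : ℕ => t ^ (-(n + 1 : ℤ)).natAbs * t ^ (-(n + 1 : ℤ) + N).natAbs)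
      (N * t ^ N + t ^ N * t ^ 2 * (1 - t ^ 2)⁻¹) := by
    have hfinite : ∑ i ∈ Finset.range N,
        t ^ (-(i + 1 : ℤ)).natAbs * t ^ (-(i + 1 : ℤ) + N).natAbs = N * t ^ N := by
      rw [← nsmul_eq_mul, ← Finset.card_range N, ← Finset.sum_const, Finset.card_range]
      refine Finset.sum_congr rfl fun i hi => ?_
      have hi := Finset.mem_range.mp hi
      rw [← pow_add]
      congr 1
      omega
    rw [← hasSum_nat_add_iff' N, hfinite, add_sub_cancel_left]
    refine (hgeom.mul_left (t ^ N * t ^ 2)).congr_fun fun n => ?_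
    rw [← pow_mul, ← pow_add, ← pow_add, ← pow_add]
    congr 1
    omega
  rw [show t ^ N * ((1 + t ^ 2) / (1 - t ^ 2) + N)
      = t ^ N * (1 - t ^ 2)⁻¹ + (N * t ^ N + t ^ N * t ^ 2 * (1 - t ^ 2)⁻¹) by field_simp; ring]
  exact hnonneg.of_nat_of_neg_add_one hneg

lemma hasSum_pow_natAbs_mul_pow_natAbs_add {t : ℝ} (ht : |t| < 1) (M : ℤ) :
    HasSum (fun a : ℤ => t ^ a.natAbs * t ^ (a + M).natAbs)
      (t ^ M.natAbs * ((1 + t ^ 2) / (1 - t ^ 2) + M.natAbs)) := by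
  obtain ⟨N, rfl | rfl⟩ := Int.eq_nat_or_neg M
  · simpa using hasSum_pow_natAbs_mul_pow_natAbs_add_natCast ht N
  · rw [← (Equiv.neg ℤ).hasSum_iff]
    convert hasSum_pow_natAbs_mul_pow_natAbs_add_natCast ht N using 1
    · ext a
      simp only [Function.comp_apply, Equiv.neg_apply]
      congr 2 <;> omega
    · simp

lemma hasSum_prod_of_nonneg {α β : Type*} {f : α × β → ℝ} (hf : ∀ p, 0 ≤ f p) {g : α → ℝ}
    {a : ℝ} (hrow : ∀ x, HasSum (fun y => f (x, y)) (g x)) (hg : HasSum g a) : HasSum f a := by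
  have hsum : Summable f := (summable_prod_of_nonneg hf).mpr
    ⟨fun x => (hrow x).summable, by simpa only [fun x => (hrow x).tsum_eq] using hg.summable⟩
  rw [hg.unique (hsum.hasSum.prod_fiberwise hrow)]
  exact hsum.hasSum

lemma hasSum_pow_natAbs_mul_pow_natAbs_add_mul {t : ℝ} (ht0 : 0 ≤ t) (ht1 : t < 1) {q : ℕ}
    (hq : q ≠ 0) :
    HasSum (fun p : ℤ × ℤ => t ^ p.2.natAbs * t ^ (p.2 + q * p.1).natAbs)
      ((1 + t ^ 2) / (1 - t ^ 2) * ((1 + t ^ q) / (1 - t ^ q)) +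
        q * (2 * t ^ q / (1 - t ^ q) ^ 2)) := by
  have ht : |t| < 1 := by rwa [abs_of_nonneg ht0]
  have hu : |t ^ q| < 1 := by rw [abs_pow]; exact pow_lt_one₀ (abs_nonneg t) ht hq
  refine hasSum_prod_of_nonneg (fun p => by positivity) (fun m => ?_)
    (((hasSum_pow_natAbs hu).mul_left _).add ((hasSum_natAbs_mul_pow_natAbs hu).mul_left _))
  convert hasSum_pow_natAbs_mul_pow_natAbs_add ht (q * m) using 1
  rw [Int.natAbs_mul, Int.natAbs_natCast, pow_mul]
  push_cast
  ring

def lqParam (q : ℕ) (p : ℤ × ℤ) : LqSet q :=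
  ⟨(p.2, ((p.2 + q * p.1 : ℤ) : ℝ)), p.2, 0, p.1, by push_cast; ring, by push_cast; ring⟩

lemma lqParam_bijective {q : ℕ} (hq : q ≠ 0) : Function.Bijective (lqParam q) := by
  constructor
  · rintro ⟨m, a⟩ ⟨m', a'⟩ h
    obtain ⟨h1, h2⟩ := Prod.ext_iff.mp (congrArg Subtype.val h)
    simp only [lqParam, Int.cast_inj] at h1 h2
    have hm : (q : ℤ) * m = q * m' := by omega
    exact Prod.ext (mul_left_cancel₀ (by exact_mod_cast hq) hm) h1
  · rintro ⟨v, z, w₁, w₂, hv₁, hv₂⟩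
    refine ⟨(w₂ - w₁, z + q * w₁), Subtype.ext (Prod.ext ?_ ?_)⟩
    · simp only [lqParam, hv₁]
      push_cast
      ring
    · simp only [lqParam, hv₂]
      push_cast
      ring

lemma fsLq_eq_tsum (f : ℝ → ℝ) (s : ℝ) {q : ℕ} (hq : q ≠ 0) :
    fsLq f s q = ∑' p : ℤ × ℤ, f (p.2 / s) * f (((p.2 + q * p.1 : ℤ) : ℝ) / s) :=
  ((Equiv.ofBijective _ (lqParam_bijective hq)).tsum_eq
    fun v : LqSet q => f ((v : ℝ × ℝ).1 / s) * f ((v : ℝ × ℝ).2 / s)).symm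

/-- Exact Laplacian mass of `L_q`:
`f_s(L_q) = coth(2/s)·coth(q/s) + 2q·e^{2q/s}/(e^{2q/s} − 1)²`. -/
theorem laplacian_mass_Lq (s : ℝ) (hs : 0 < s) (q : ℕ) (hq : 0 < q) :
    fsLq lap s q =
      coth' (2 / s) * coth' (q / s) +
        2 * q * Real.exp (2 * q / s) / (Real.exp (2 * q / s) - 1) ^ 2 := by
  have hlap (n : ℤ) : lap (n / s) = lap s⁻¹ ^ n.natAbs := by rw [div_eq_mul_inv, lap_intCast_mul]
  have hexp (n : ℕ) : exp (-2 * (n / s)) = lap s⁻¹ ^ n := by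
    have h := hlap n
    rw [Int.cast_natCast, Int.natAbs_natCast, lap, abs_of_nonneg (by positivity)] at h
    exact h
  have hlap_nonneg : 0 ≤ lap s⁻¹ := (exp_pos _).le
  have hlap_lt_one : lap s⁻¹ < 1 := by
    rw [lap, exp_lt_one_iff, abs_inv, abs_of_pos hs]
    linarith [inv_pos.mpr hs]
  rw [fsLq_eq_tsum lap s hq.ne']
  simp only [hlap]
  rw [(hasSum_pow_natAbs_mul_pow_natAbs_add_mul hlap_nonneg hlap_lt_one hq.ne').tsum_eq,
    coth'_eq_div, coth'_eq_div, mul_div_assoc (2 * (q : ℝ)), exp_div_exp_sub_one_sq,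
    show (2 : ℝ) / s = (2 : ℕ) / s by norm_num, hexp, hexp,
    show -(2 * q / s) = -2 * (q / s) by ring, hexp]
  ring

end
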